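/- arXiv:1612.06730 — 4 statements merged into one kernel-verified Lean document; each statement's English description precedes it below -/
import Mathlib

section
/- Consider the tridiagonal linear system: -b·a_0 + r·a_1 = (r-2)(g-1) - 2 + b, and -n_k·a_k + a_{k-1} + a_{k+1} = -2 + n_k for k = 1,...,λ (with a_{λ+1} = 0), where g = gcd(r,d), b = g(1+b'β)/α, α = d/g, b' = r/g, β ∈ (0,α) satisfies b'β ≡ -1 (mod α), and n_1,...,n_λ are the Hirzebruch–Jung digits of α/β. Then the solution satisfies a_0 = (2-r)α + b' - 1, a_1 = (2-r)β + (1+b'β)/α - 1, and a_λ = -(r-2). -/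
/-!
Put `a* = a + 1`. Then `a*` and `c` solve the same homogeneous three-term recurrence
`x (k-1) = n k * x k - x (k+1)`, so `e := a* - a*(λ) • c` is the solution with `e λ = 0`,
`e (λ+1) = 1`. The Wronskian of `c` and `e` is constant, giving `α e₁ - β e₀ = 1`, and since
all `n k ≥ 2` the chains `-e` and `c + e` are convex, which forces `1 - α ≤ e₀ ≤ -1`. Hence
`β e₀ ≡ -1 ≡ b' β (mod α)` pins down `e₀ = b' - α` and then `e₁ = (1 + b'β)/α - β`.
Finally the first equation of the system is `g (1 - a*(λ)) = g (r - 2)`, so `a*(λ) = 3 - r`.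
-/

namespace HirzebruchJung

def solutions (n : ℕ → ℤ) (lam : ℕ) : Submodule ℤ (ℕ → ℤ) where
  carrier := {x | ∀ k, 1 ≤ k → k ≤ lam → x (k - 1) = n k * x k - x (k + 1)}
  add_mem' hx hy k h1 h2 := by simp only [Pi.add_apply, hx k h1 h2, hy k h1 h2]; ring
  zero_mem' k _ _ := by simp
  smul_mem' u x hx k h1 h2 := by simp only [Pi.smul_apply, smul_eq_mul, hx k h1 h2]; ring

variable {n : ℕ → ℤ} {lam : ℕ} {x y : ℕ → ℤ}

theorem add_one_mem_solutions
    (h : ∀ k, 1 ≤ k → k ≤ lam → -(n k) * x k + x (k - 1) + x (k + 1) = -2 + n k) :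
    x + 1 ∈ solutions n lam := fun k h1 h2 => by
  simp only [Pi.add_apply, Pi.one_apply]
  linear_combination h k h1 h2

theorem wronskian_zero_eq (hx : x ∈ solutions n lam) (hy : y ∈ solutions n lam) :
    x 0 * y 1 - x 1 * y 0 = x lam * y (lam + 1) - x (lam + 1) * y lam := by
  have step : ∀ k < lam,
      x k * y (k + 1) - x (k + 1) * y k = x (k + 1) * y (k + 2) - x (k + 2) * y (k + 1) := by
    intro k hk
    have hxk := hx (k + 1) (by omega) hk
    have hyk := hy (k + 1) (by omega) hk
    rw [Nat.add_sub_cancel] at hxk hyk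
    rw [hxk, hyk]
    ring
  have hconst : ∀ m ≤ lam, x 0 * y 1 - x 1 * y 0 = x m * y (m + 1) - x (m + 1) * y m := by
    intro m hm
    induction m with
    | zero => rfl
    | succ m ih => rw [ih (by omega), step m (by omega)]
  exact hconst lam le_rfl

theorem le_and_sub_le_of_two_le (hn : ∀ k, 1 ≤ k → k ≤ lam → 2 ≤ n k)
    (hx : x ∈ solutions n lam) (h0 : 0 ≤ x lam) (h1 : x (lam + 1) ≤ x lam)
    {k : ℕ} (hk : k ≤ lam) :
    x lam ≤ x k ∧ x lam - x (lam + 1) ≤ x k - x (k + 1) := by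
  induction hk using Nat.decreasingInduction with
  | self => simp
  | of_succ k hk ih =>
    obtain ⟨ih₁, ih₂⟩ := ih
    have hrec := hx (k + 1) (by omega) hk
    rw [Nat.add_sub_cancel] at hrec
    have hconv : 0 ≤ (n (k + 1) - 2) * x (k + 1) :=
      mul_nonneg (sub_nonneg.2 (hn (k + 1) (by omega) hk)) (h0.trans ih₁)
    constructor <;> linarith

theorem eq_sub_of_mul_sub_mul_eq_one {α β b' e₀ e₁ : ℤ} (hW : α * e₁ - β * e₀ = 1)
    (hdvd : α ∣ b' * β + 1) (hb'₀ : 0 < b') (hb'α : b' ≤ α) (he₀ : 1 - α ≤ e₀)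
    (he₀' : e₀ ≤ -1) : e₀ = b' - α := by
  obtain ⟨q, hq⟩ := hdvd
  have hcop : IsCoprime α β := ⟨e₁, -e₀, by linear_combination hW⟩
  have hmul : α ∣ β * (e₀ - (b' - α)) := ⟨e₁ - q + β, by linear_combination -hW - hq⟩
  have hzero := Int.eq_zero_of_abs_lt_dvd (hcop.dvd_of_dvd_mul_left hmul)
    (abs_lt.2 ⟨by linarith, by linarith⟩)
  linarith

section Companion

variable {c e : ℕ → ℤ} (hn : ∀ k, 1 ≤ k → k ≤ lam → 2 ≤ n k) (hlam : 1 ≤ lam)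
  (hc : c ∈ solutions n lam) (hcl : c lam = 1) (hcl₁ : c (lam + 1) = 0)
  (he : e ∈ solutions n lam) (hel : e lam = 0) (hel₁ : e (lam + 1) = 1)
include hn hlam hc hcl hcl₁ he hel hel₁

theorem one_sub_le_companion_zero_and_le : 1 - c 0 ≤ e 0 ∧ e 0 ≤ -1 := by
  have hneg {k} := le_and_sub_le_of_two_le (k := k) hn (neg_mem he)
    (by simp [hel]) (by simp [hel, hel₁])
  have hsum {k} := le_and_sub_le_of_two_le (k := k) hn (add_mem hc he)
    (by simp [hcl, hel]) (by simp [hcl, hcl₁, hel, hel₁])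
  obtain ⟨-, hneg₀⟩ := hneg (Nat.zero_le lam)
  obtain ⟨hneg₁, -⟩ := hneg hlam
  obtain ⟨hsum₀, -⟩ := hsum (Nat.zero_le lam)
  simp only [Pi.neg_apply, Pi.add_apply, hcl, hel, hel₁] at hneg₀ hneg₁ hsum₀
  constructor <;> linarith

theorem companion_zero_one_eq {α β b' : ℤ} (hc₀ : c 0 = α) (hc₁ : c 1 = β)
    (hdvd : α ∣ b' * β + 1) (hb'₀ : 0 < b') (hb'α : b' ≤ α) :
    e 0 = b' - α ∧ e 1 = (1 + b' * β) / α - β := by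
  have hW : α * e 1 - β * e 0 = 1 := by
    rw [← hc₀, ← hc₁, wronskian_zero_eq hc he, hcl, hcl₁, hel, hel₁]
    ring
  obtain ⟨h₀, h₀'⟩ := one_sub_le_companion_zero_and_le hn hlam hc hcl hcl₁ he hel hel₁
  rw [hc₀] at h₀
  have he₀ := eq_sub_of_mul_sub_mul_eq_one hW hdvd hb'₀ hb'α h₀ h₀'
  refine ⟨he₀, eq_sub_of_add_eq (Int.eq_ediv_of_mul_eq_right (by omega) ?_)⟩
  linear_combination hW + β * he₀

end Companion

end HirzebruchJung

theorem div_gcd_pos_and_le {r d g : ℤ} (hr : 0 < r) (hrd : r ≤ d) (hg : g = Int.gcd r d) :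
    0 < r / g ∧ r / g ≤ d / g := by
  have hg₀ : 0 < g := hg ▸ mod_cast Int.gcd_pos_of_ne_zero_left d hr.ne'
  exact ⟨Int.ediv_pos_of_pos_of_dvd hr hg₀.le (hg ▸ Int.gcd_dvd_left r d), Int.ediv_le_ediv hg₀ hrd⟩

open HirzebruchJung in
theorem stmt_10_general (r d g α b' β b : ℤ) (hr : 3 ≤ r) (hrd : r ≤ d)
    (hg : g = Int.gcd r d) (hα : α = d / g) (hb' : b' = r / g)
    (hmod : α ∣ b' * β + 1)
    (hb : b = g * (1 + b' * β) / α)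
    (lam : ℕ) (hlam : 1 ≤ lam) (n : ℕ → ℤ) (hn : ∀ i, 1 ≤ i → i ≤ lam → 2 ≤ n i)
    (c : ℕ → ℤ) (hc0 : c 0 = α) (hc1 : c 1 = β)
    (hclam : c lam = 1) (hclam1 : c (lam + 1) = 0)
    (hcrec : ∀ i, 1 ≤ i → i ≤ lam → c (i - 1) = n i * c i - c (i + 1))
    (a : ℕ → ℤ) (hatop : a (lam + 1) = 0)
    (hsys0 : -b * a 0 + r * a 1 = (r - 2) * (g - 1) - 2 + b)
    (hsysk : ∀ k, 1 ≤ k → k ≤ lam → -(n k) * a k + a (k - 1) + a (k + 1) = -2 + n k) :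
    a 0 = (2 - r) * α + b' - 1 ∧
    a 1 = (2 - r) * β + (1 + b' * β) / α - 1 ∧
    a lam = -(r - 2) := by
  set A := a lam + 1
  set e : ℕ → ℤ := (a + 1) - A • c
  have he : e ∈ solutions n lam :=
    sub_mem (add_one_mem_solutions hsysk) (Submodule.smul_mem _ _ hcrec)
  have ha : ∀ k, a k = A * c k + e k - 1 := fun k => by simp [e]
  obtain ⟨hb'₀, hb'α⟩ := div_gcd_pos_and_le (by omega : 0 < r) hrd hg
  have hel : e lam = 0 := by simp [e, hclam, A]
  obtain ⟨he₀, he₁⟩ := companion_zero_one_eq hn hlam hcrec hclam hclam1 he hel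
    (by simp [e, hatop, hclam1]) hc0 hc1 hmod
    (hb' ▸ hb'₀) (hα ▸ hb' ▸ hb'α)
  set q := (1 + b' * β) / α
  have hq : α * q = 1 + b' * β := Int.mul_ediv_cancel' (by rwa [add_comm])
  have hbq : b = g * q := by rw [hb, Int.mul_ediv_assoc _ (by rwa [add_comm])]
  have hrg : g * b' = r := hb' ▸ Int.mul_ediv_cancel' (hg ▸ Int.gcd_dvd_left r d)
  have hA : A = 3 - r := by
    have hg₀ : g ≠ 0 := left_ne_zero_of_mul (hrg.trans_ne (by omega))
    rw [ha 0, ha 1, hc0, hc1, he₀, he₁, hbq, ← hrg] at hsys0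
    exact mul_left_cancel₀ hg₀ (by linear_combination -hsys0 + g * (1 - A) * hq - g * hrg)
  refine ⟨?_, ?_, ?_⟩
  · rw [ha 0, hc0, he₀, hA]; ring
  · rw [ha 1, hc1, he₁, hA]; ring
  · rw [ha lam, hclam, hel, hA]; ring

/-- The tridiagonal system `-b·a₀ + r·a₁ = (r-2)(g-1) - 2 + b`,
`-n_k·a_k + a_{k-1} + a_{k+1} = -2 + n_k` for `k = 1,…,λ` (with `a_{λ+1} = 0`),
where `g = gcd(r,d)`, `α = d/g`, `b' = r/g`, `0 < β < α` with `b'β ≡ -1 (mod α)`,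
`b = g(1+b'β)/α`, and `n₁,…,n_λ` are the Hirzebruch–Jung digits of `α/β`
(encoded by the auxiliary sequence `c`), has solution
`a₀ = (2-r)α + b' - 1`, `a₁ = (2-r)β + (1+b'β)/α - 1`, `a_λ = -(r-2)`. -/
theorem stmt_10 (r d g α b' β b : ℤ) (hr : 3 ≤ r) (hrd : r ≤ d)
    (hg : g = Int.gcd r d) (hα : α = d / g) (hb' : b' = r / g)
    (hβ0 : 0 < β) (hβα : β < α) (hmod : α ∣ b' * β + 1)
    (hb : b = g * (1 + b' * β) / α)
    (lam : ℕ) (hlam : 1 ≤ lam) (n : ℕ → ℤ) (hn : ∀ i, 1 ≤ i → i ≤ lam → 2 ≤ n i)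
    (c : ℕ → ℤ) (hc0 : c 0 = α) (hc1 : c 1 = β)
    (hclam : c lam = 1) (hclam1 : c (lam + 1) = 0)
    (hcpos : ∀ i ≤ lam, 0 < c i)
    (hcrec : ∀ i, 1 ≤ i → i ≤ lam → c (i - 1) = n i * c i - c (i + 1))
    (a : ℕ → ℤ) (hatop : a (lam + 1) = 0)
    (hsys0 : -b * a 0 + r * a 1 = (r - 2) * (g - 1) - 2 + b)
    (hsysk : ∀ k, 1 ≤ k → k ≤ lam → -(n k) * a k + a (k - 1) + a (k + 1) = -2 + n k) :
    a 0 = (2 - r) * α + b' - 1 ∧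
    a 1 = (2 - r) * β + (1 + b' * β) / α - 1 ∧
    a lam = -(r - 2) :=
  stmt_10_general r d g α b' β b hr hrd hg hα hb' hmod hb lam hlam n hn c hc0 hc1 hclam hclam1 hcrec
    a hatop hsys0 hsysk
end

section
/- In the setting of the resolution of the singularity G_r(u,v) + t^d = 0 with r ≥ 3 and d ≢ 1 (mod r): DCI_{r,d} = -d(r-2)^2 - r·Σ_{i=1}^{λ}(n_i - 2) + 2(r-2)(r - gcd(r,d)) + (r - b), where b = gcd(r,d)(1+b'β)/α, and moreover each of the three correction terms -r·Σ(n_i-2), 2(r-2)(r-gcd(r,d)), and r-b satisfies: the first is ≤ 0 and the last two are ≥ 0; in particular r - b = (gcd(r,d)/α)(b'(α-β) - 1) ≥ 0. -/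
/-! The first two signs come from `nᵢ ≥ 2` and `gcd(r,d) ∣ r`. For the last term write
`r = g b'` and `1 + b'β = αk`; then `b = gk` and `b'(α - β) - 1 = α(b' - k)`, so both sides of the
identity equal `g(b' - k)`, which is nonnegative because `b' ≥ 1` and `α - β ≥ 1`. -/

lemma mul_sub_mul_one_add_ediv {g b' α β : ℤ} (hα : α ≠ 0) (h : α ∣ b' * β + 1) :
    g * b' - g * (1 + b' * β) / α = g * (b' * (α - β) - 1) / α := by
  obtain ⟨k, hk⟩ := h
  rw [show g * (1 + b' * β) = α * (g * k) by rw [add_comm, hk]; ring,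
    show g * (b' * (α - β) - 1) = α * (g * (b' - k)) by linear_combination (-g) * hk,
    Int.mul_ediv_cancel_left _ hα, Int.mul_ediv_cancel_left _ hα]
  ring

lemma mul_mul_sub_sub_one_ediv_nonneg {g b' α β : ℤ} (hg : 0 ≤ g) (hb' : 1 ≤ b') (hα : 0 < α)
    (hβα : β < α) : 0 ≤ g * (b' * (α - β) - 1) / α :=
  Int.ediv_nonneg (mul_nonneg hg (sub_nonneg.mpr (one_le_mul_of_one_le_of_one_le hb' (by omega))))
    hα.le

theorem stmt_11_general (r d g α b' β b : ℤ) (hr : 3 ≤ r)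
    (hg : g = Int.gcd r d) (hb' : b' = r / g)
    (hβ0 : 0 < β) (hβα : β < α) (hmod : α ∣ b' * β + 1)
    (hb : b = g * (1 + b' * β) / α)
    (lam : ℕ) (n : ℕ → ℤ) (hn : ∀ i, 1 ≤ i → i ≤ lam → 2 ≤ n i) :
    (-(r * ∑ i ∈ Finset.Icc 1 lam, (n i - 2)) ≤ 0) ∧
    (0 ≤ 2 * (r - 2) * (r - g)) ∧
    (r - b = g * (b' * (α - β) - 1) / α) ∧
    (0 ≤ r - b) := by
  have hr0 : 0 < r := by omega
  have hα0 : 0 < α := hβ0.trans hβα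
  have hgr : g ∣ r := hg ▸ Int.gcd_dvd_left r d
  have hg0 : 0 < g := hg ▸ Int.natCast_pos.mpr (Int.gcd_pos_of_ne_zero_left d hr0.ne')
  have hr_eq : r = g * b' := by rw [hb', Int.mul_ediv_cancel' hgr]
  have hb'1 : 1 ≤ b' := hb' ▸ Int.ediv_pos_of_pos_of_dvd hr0 hg0.le hgr
  have hrb : r - b = g * (b' * (α - β) - 1) / α := by
    rw [hb, hr_eq]
    exact mul_sub_mul_one_add_ediv hα0.ne' hmod
  refine ⟨?_, ?_, hrb, hrb ▸ mul_mul_sub_sub_one_ediv_nonneg hg0.le hb'1 hα0 hβα⟩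
  · refine neg_nonpos.mpr (mul_nonneg hr0.le (Finset.sum_nonneg fun i hi => ?_))
    obtain ⟨hi1, hilam⟩ := Finset.mem_Icc.mp hi
    exact sub_nonneg.mpr (hn i hi1 hilam)
  · exact mul_nonneg (by omega) (sub_nonneg.mpr (Int.le_of_dvd hr0 hgr))

/-- For the resolution of `G_r(u,v) + t^d = 0` with `r ≥ 3`, `d ≢ 1 (mod r)`:
`DCI_{r,d} = -d(r-2)² - r·∑(nᵢ-2) + 2(r-2)(r - gcd(r,d)) + (r - b)` with
`b = gcd(r,d)(1+b'β)/α`, and the three correction terms satisfy: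
`-r·∑(nᵢ-2) ≤ 0`, `2(r-2)(r-gcd(r,d)) ≥ 0`, and
`r - b = (gcd(r,d)/α)(b'(α-β) - 1) ≥ 0`. -/
theorem stmt_11 (r d g α b' β b DCI : ℤ) (hr : 3 ≤ r) (hrd : r ≤ d)
    (hdr : ¬ d % r = 1)
    (hg : g = Int.gcd r d) (hα : α = d / g) (hb' : b' = r / g)
    (hβ0 : 0 < β) (hβα : β < α) (hmod : α ∣ b' * β + 1)
    (hb : b = g * (1 + b' * β) / α)
    (lam : ℕ) (n : ℕ → ℤ) (hn : ∀ i, 1 ≤ i → i ≤ lam → 2 ≤ n i)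
    (c : ℕ → ℤ) (hc0 : c 0 = α) (hc1 : c 1 = β)
    (hclam : c lam = 1) (hclam1 : c (lam + 1) = 0)
    (hcpos : ∀ i ≤ lam, 0 < c i)
    (hcrec : ∀ i, 1 ≤ i → i ≤ lam → c (i - 1) = n i * c i - c (i + 1))
    (hDCI : DCI = -d * (r - 2) ^ 2 - r * (∑ i ∈ Finset.Icc 1 lam, (n i - 2))
      + 2 * (r - 2) * (r - g) + (r - b)) :
    (-(r * ∑ i ∈ Finset.Icc 1 lam, (n i - 2)) ≤ 0) ∧
    (0 ≤ 2 * (r - 2) * (r - g)) ∧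
    (r - b = g * (b' * (α - β) - 1) / α) ∧
    (0 ≤ r - b) :=
  stmt_11_general r d g α b' β b hr hg hb' hβ0 hβα hmod hb lam n hn
end

section
/- For r ≥ 3 and d = rp + 1 (p ≥ 1): DCI_{r,d} = -(d-1)(r-2)^2, DCII_{r,d} = d - 1, and E_{r,d} = (d-1)(r-1)(3-r) + 3(d-1) + (d-1)(r-2)^2 = 4(d-1). -/
open Finset

def chainForm (r k k' : ℤ) : ℤ :=
  if k = k' then (if k = 1 then -r else -2 * r)
  else if (k - k').natAbs = 1 then r else 0

lemma chainForm_eq_diag_add_neighbours (r k k' : ℤ) :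
    chainForm r k k' = (if k' = k then (if k = 1 then -r else -2 * r) else 0) +
      (if k' = k - 1 then r else 0) + (if k' = k + 1 then r else 0) := by
  unfold chainForm
  split_ifs <;> omega

/-- The weights `p + 1 - k'` are affine in `k'` and vanish at `k' = p + 1`, so they are annihilated
by every row `k ≥ 2` of the form (a discrete second difference); only the row of `E₁` survives. -/
lemma sum_weight_mul_chainForm {r p k : ℤ} (hk : k ∈ Icc 1 p) :
    ∑ k' ∈ Icc 1 p, (p + 1 - k') * chainForm r k k' = if k = 1 then -r else 0 := by
  rw [mem_Icc] at hk
  simp only [chainForm_eq_diag_add_neighbours, mul_add, sum_add_distrib, mul_ite, mul_zero,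
    sum_ite_eq', mem_Icc]
  split_ifs <;> first
    | (exfalso; omega)
    | ring1
    | (obtain rfl : k = p := by omega); ring1

lemma weighted_chain_self_intersection {r p : ℤ} (hp : 0 ≤ p) :
    ∑ k ∈ Icc 1 p, ∑ k' ∈ Icc 1 p, (p + 1 - k) * (p + 1 - k') * chainForm r k k' = -(r * p) := by
  simp_rw [mul_assoc, ← mul_sum]
  rw [sum_congr rfl fun k hk => by rw [sum_weight_mul_chainForm hk]]
  simp only [mul_ite, mul_zero, sum_ite_eq', mem_Icc]
  split_ifs
  · ring
  · obtain rfl : p = 0 := by omega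
    ring

theorem stmt_13_general (r p : ℤ) (hp : 1 ≤ p) (d : ℤ) (hd : d = r * p + 1)
    (M : ℤ → ℤ → ℤ)
    (hM : ∀ k k', M k k' =
      if k = k' then (if k = 1 then -r else -2 * r)
      else if (k - k').natAbs = 1 then r else 0)
    (S DCI DCII E : ℤ)
    (hS : S = ∑ k ∈ Finset.Icc 1 p, ∑ k' ∈ Finset.Icc 1 p,
      (p + 1 - k) * (p + 1 - k') * M k k')
    (hDCI : DCI = (r - 2) ^ 2 * S)
    (hDCII : DCII = r * p)
    (hE : E = (d - 1) * (r - 1) * (3 - r) + 3 * DCII - DCI) :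
    S = -(r * p) ∧ DCI = -(d - 1) * (r - 2) ^ 2 ∧ DCII = d - 1 ∧ E = 4 * (d - 1) := by
  obtain rfl : M = chainForm r := funext fun k => funext fun k' => hM k k'
  have hS' : S = -(r * p) := hS.trans (weighted_chain_self_intersection (by omega))
  subst hd hS' hDCI hDCII hE
  refine ⟨rfl, ?_, ?_, ?_⟩ <;> ring

/-- For `r ≥ 3` and `d = rp + 1` (`p ≥ 1`): the weighted self-intersection
`(∑_{k=1}^{p}(p+1-k)E_k)² = -rp` (with `E₁² = -r`, `E_k² = -2r` for `k ≥ 2`,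
`E_k·E_{k±1} = r`, other products `0`), and hence
`DCI_{r,d} = (r-2)²·(that square) = -(d-1)(r-2)²`, `DCII_{r,d} = rλ = rp = d-1`,
and `E_{r,d} = (d-1)(r-1)(3-r) + 3·DCII - DCI = 4(d-1)`. -/
theorem stmt_13 (r p : ℤ) (hr : 3 ≤ r) (hp : 1 ≤ p) (d : ℤ) (hd : d = r * p + 1)
    (M : ℤ → ℤ → ℤ)
    (hM : ∀ k k', M k k' =
      if k = k' then (if k = 1 then -r else -2 * r)
      else if (k - k').natAbs = 1 then r else 0)
    (S DCI DCII E : ℤ)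
    (hS : S = ∑ k ∈ Finset.Icc 1 p, ∑ k' ∈ Finset.Icc 1 p,
      (p + 1 - k) * (p + 1 - k') * M k k')
    (hDCI : DCI = (r - 2) ^ 2 * S)
    (hDCII : DCII = r * p)
    (hE : E = (d - 1) * (r - 1) * (3 - r) + 3 * DCII - DCI) :
    S = -(r * p) ∧ DCI = -(d - 1) * (r - 2) ^ 2 ∧ DCII = d - 1 ∧ E = 4 * (d - 1) :=
  stmt_13_general r p hp d hd M hM S DCI DCII E hS hDCI hDCII hE
end

section
/- Suppose d ≥ 3, t_d = t_{d-1} = 0, the combinatorial identity Σ_r t_r r(r-1) = d(d-1) holds, and Hirzebruch's inequality t_2 + (3/4)t_3 ≥ d + Σ_{r≥5}(r-4)t_r holds. If E_{2,d} = 4(d-1), E_{3,d} ≥ 4(d-3), and E_{r,d} > -2r(r-1) for r ≥ 4, then Σ_r t_r E_{r,d} > 0. -/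
/-!
Write `A = ∑_{r ≥ 4} t_r r(r-1)`, so that the combinatorial identity reads
`2 t₂ + 6 t₃ + A = d(d-1)`. Bounding each `E_{r,d}` with `r ≥ 4` below by `-2r(r-1)` and
eliminating `A` gives `∑ t_r E_{r,d} ≥ 2d (2(t₂ + t₃) - (d-1))`, and Hirzebruch's inequality
gives `t₂ + t₃ ≥ d`, so the sum is at least `2d(d+1) > 0`.
-/

open Finset

lemma sum_Icc_two_eq_add_add_sum_Icc_four {M : Type*} [AddCommMonoid M] (f : ℕ → M)
    {d : ℕ} (hd : 3 ≤ d) :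
    ∑ r ∈ Icc 2 d, f r = f 2 + f 3 + ∑ r ∈ Icc 4 d, f r := by
  rw [← insert_Icc_add_one_left_eq_Icc (by omega : 2 ≤ d),
    ← insert_Icc_add_one_left_eq_Icc (by omega : 2 + 1 ≤ d),
    sum_insert (by simp), sum_insert (by simp)]
  norm_num [add_assoc]

lemma cast_sum_mul_mul_pred (s : Finset ℕ) (t : ℕ → ℕ) :
    ((∑ r ∈ s, t r * (r * (r - 1)) : ℕ) : ℝ) = ∑ r ∈ s, (t r : ℝ) * (r * (r - 1)) := by
  push_cast
  refine sum_congr rfl fun r _ => ?_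
  rcases r with _ | r <;> simp

lemma neg_two_mul_sum_le_sum_mul (s : Finset ℕ) (t : ℕ → ℕ) (E : ℕ → ℝ)
    (hE : ∀ r ∈ s, -2 * r * (r - 1) ≤ E r) :
    -2 * ∑ r ∈ s, (t r : ℝ) * (r * (r - 1)) ≤ ∑ r ∈ s, (t r : ℝ) * E r := by
  rw [mul_sum]
  refine sum_le_sum fun r hr => ?_
  nlinarith [mul_le_mul_of_nonneg_left (hE r hr) (Nat.cast_nonneg (t r) : (0 : ℝ) ≤ t r)]

lemma le_add_of_hirzebruch {d : ℕ} {t : ℕ → ℕ}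
    (hHir : (d : ℝ) + ∑ r ∈ Icc 5 d, ((r : ℝ) - 4) * t r ≤ t 2 + (3 / 4) * t 3) :
    (d : ℝ) ≤ t 2 + t 3 := by
  have htail : 0 ≤ ∑ r ∈ Icc 5 d, ((r : ℝ) - 4) * t r := by
    refine sum_nonneg fun r hr => mul_nonneg ?_ (Nat.cast_nonneg _)
    have : (5 : ℝ) ≤ r := by exact_mod_cast (mem_Icc.mp hr).1
    linarith
  linarith [(Nat.cast_nonneg (t 3) : (0 : ℝ) ≤ t 3)]

lemma two_mul_sub_le_sum_mul {d : ℕ} (hd : 3 ≤ d) (t : ℕ → ℕ) (E : ℕ → ℝ)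
    (hcomb : ∑ r ∈ Icc 2 d, t r * (r * (r - 1)) = d * (d - 1))
    (hE2 : 4 * ((d : ℝ) - 1) ≤ E 2) (hE3 : 4 * ((d : ℝ) - 3) ≤ E 3)
    (hEr : ∀ r : ℕ, 4 ≤ r → -2 * r * (r - 1) ≤ E r) :
    2 * d * (2 * ((t 2 : ℝ) + t 3) - (d - 1)) ≤ ∑ r ∈ Icc 2 d, (t r : ℝ) * E r := by
  have hcombR := congrArg (Nat.cast : ℕ → ℝ) hcomb
  rw [cast_sum_mul_mul_pred, sum_Icc_two_eq_add_add_sum_Icc_four _ hd,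
    Nat.cast_mul, Nat.cast_pred (by omega)] at hcombR
  have htail := neg_two_mul_sum_le_sum_mul (Icc 4 d) t E
    fun r hr => hEr r (mem_Icc.mp hr).1
  have h2 := mul_le_mul_of_nonneg_left hE2 (Nat.cast_nonneg (t 2) : (0 : ℝ) ≤ t 2)
  have h3 := mul_le_mul_of_nonneg_left hE3 (Nat.cast_nonneg (t 3) : (0 : ℝ) ≤ t 3)
  rw [sum_Icc_two_eq_add_add_sum_Icc_four _ hd]
  norm_num at hcombR
  linarith

theorem stmt_18_general (d : ℕ) (hd : 3 ≤ d) (t : ℕ → ℕ) (E : ℕ → ℝ)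
    (hcomb : ∑ r ∈ Finset.Icc 2 d, t r * (r * (r - 1)) = d * (d - 1))
    (hHir : (t 2 : ℝ) + (3 / 4) * t 3 ≥
      (d : ℝ) + ∑ r ∈ Finset.Icc 5 d, ((r : ℝ) - 4) * t r)
    (hE2 : E 2 = 4 * ((d : ℝ) - 1))
    (hE3 : E 3 ≥ 4 * ((d : ℝ) - 3))
    (hEr : ∀ r : ℕ, 4 ≤ r → E r > -2 * r * (r - 1)) :
    0 < ∑ r ∈ Finset.Icc 2 d, (t r : ℝ) * E r := by
  have hlower := two_mul_sub_le_sum_mul hd t E hcomb hE2.ge hE3 fun r hr => (hEr r hr).le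
  have hpoints := le_add_of_hirzebruch hHir
  have hdpos : (0 : ℝ) < d := by exact_mod_cast (by omega : 0 < d)
  nlinarith

/-- Suppose `d ≥ 3`, `t_d = t_{d-1} = 0`, `∑_r t_r r(r-1) = d(d-1)`, and
Hirzebruch's inequality `t₂ + (3/4)t₃ ≥ d + ∑_{r≥5}(r-4)t_r` holds.  If
`E_{2,d} = 4(d-1)`, `E_{3,d} ≥ 4(d-3)`, and `E_{r,d} > -2r(r-1)` for `r ≥ 4`,
then `∑_r t_r E_{r,d} > 0`. -/
theorem stmt_18 (d : ℕ) (hd : 3 ≤ d) (t : ℕ → ℕ) (E : ℕ → ℝ)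
    (htd : t d = 0) (htd1 : t (d - 1) = 0)
    (hcomb : ∑ r ∈ Finset.Icc 2 d, t r * (r * (r - 1)) = d * (d - 1))
    (hHir : (t 2 : ℝ) + (3 / 4) * t 3 ≥
      (d : ℝ) + ∑ r ∈ Finset.Icc 5 d, ((r : ℝ) - 4) * t r)
    (hE2 : E 2 = 4 * ((d : ℝ) - 1))
    (hE3 : E 3 ≥ 4 * ((d : ℝ) - 3))
    (hEr : ∀ r : ℕ, 4 ≤ r → E r > -2 * r * (r - 1)) :
    0 < ∑ r ∈ Finset.Icc 2 d, (t r : ℝ) * E r :=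
  stmt_18_general d hd t E hcomb hHir hE2 hE3 hEr
end
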